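/- Let q ≥ 2 be an integer and H ∈ (0,1), and define ρ_H : ℤ → ℝ by ρ_H(r) = (1/2)(|r+1|^{2H} + |r−1|^{2H} − 2|r|^{2H}). Then Σ_{r∈ℤ} |ρ_H(r)|^q < ∞ if and only if H < 1 − 1/(2q). -/

import Mathlib

/-!
For `x > 1`, `ρ_H(x)` is half the second difference of `y ↦ y ^ (2H)` at `x`, so two applications
of the mean value theorem give `ρ_H(x) = H (2H - 1) η ^ (2H - 2)` for some `η ∈ (x - 1, x + 1)`.
For `H ≠ 1/2` this squeezes `|ρ_H(n)| ^ q` between constant multiples of `(n ± 1) ^ ((2H - 2) q)`,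
so the series converges iff `(2H - 2) q < -1`, i.e. `H < 1 - 1/(2q)`. For `H = 1/2` the
covariance vanishes off `{-1, 0, 1}`, and `1/2 < 1 - 1/(2q)` because `q ≥ 2`.
-/

open Real Set

noncomputable def fgnCov (H x : ℝ) : ℝ :=
  1 / 2 * (|x + 1| ^ (2 * H) + |x - 1| ^ (2 * H) - 2 * |x| ^ (2 * H))

lemma fgnCov_neg (H x : ℝ) : fgnCov H (-x) = fgnCov H x := by
  rw [fgnCov, fgnCov, show -x + 1 = -(x - 1) by ring, show -x - 1 = -(x + 1) by ring,
    abs_neg, abs_neg, abs_neg]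
  ring

lemma fgnCov_half {x : ℝ} (hx : 1 ≤ x) : fgnCov (1 / 2) x = 0 := by
  rw [fgnCov, show (2 : ℝ) * (1 / 2) = 1 by norm_num, rpow_one, rpow_one, rpow_one,
    abs_of_nonneg (by linarith : 0 ≤ x + 1), abs_of_nonneg (by linarith : 0 ≤ x - 1),
    abs_of_nonneg (by linarith : 0 ≤ x)]
  ring

lemma exists_second_difference_eq {f f' f'' : ℝ → ℝ} {x : ℝ}
    (hf : ∀ y ∈ Icc (x - 1) (x + 1), HasDerivAt f (f' y) y)
    (hf' : ∀ y ∈ Icc (x - 1) (x + 1), HasDerivAt f' (f'' y) y) :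
    ∃ η ∈ Ioo (x - 1) (x + 1), f (x + 1) + f (x - 1) - 2 * f x = f'' η := by
  have hdiff : ∀ y ∈ Icc (x - 1) x,
      HasDerivAt (fun y => f (y + 1) - f y) (f' (y + 1) - f' y) y := fun y hy =>
    (HasDerivAt.comp_add_const y 1 (hf (y + 1) ⟨by linarith [hy.1], by linarith [hy.2]⟩)).sub
      (hf y ⟨hy.1, by linarith [hy.2]⟩)
  obtain ⟨ξ, hξ, hξeq⟩ := exists_hasDerivAt_eq_slope _ _ (by linarith : x - 1 < x)
    (fun y hy => (hdiff y hy).continuousAt.continuousWithinAt)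
    (fun y hy => hdiff y (Ioo_subset_Icc_self hy))
  have hξ' : ∀ y ∈ Icc ξ (ξ + 1), y ∈ Icc (x - 1) (x + 1) := fun y hy =>
    ⟨by linarith [hξ.1, hy.1], by linarith [hξ.2, hy.2]⟩
  obtain ⟨η, hη, hηeq⟩ := exists_hasDerivAt_eq_slope f' f'' (by linarith : ξ < ξ + 1)
    (fun y hy => (hf' y (hξ' y hy)).continuousAt.continuousWithinAt)
    (fun y hy => hf' y (hξ' y (Ioo_subset_Icc_self hy)))
  refine ⟨η, ⟨by linarith [hξ.1, hη.1], by linarith [hξ.2, hη.2]⟩, ?_⟩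
  rw [hηeq, add_sub_cancel_left, div_one, hξeq, sub_sub_cancel, div_one, sub_add_cancel]
  ring

lemma exists_fgnCov_eq (H : ℝ) {x : ℝ} (hx : 1 < x) :
    ∃ η ∈ Ioo (x - 1) (x + 1), fgnCov H x = H * (2 * H - 1) * η ^ (2 * H - 2) := by
  have hpos : ∀ y ∈ Icc (x - 1) (x + 1), y ≠ 0 := fun y hy => by linarith [hy.1]
  obtain ⟨η, hη, h⟩ := exists_second_difference_eq (f := fun y => y ^ (2 * H))
    (fun y hy => hasDerivAt_rpow_const (Or.inl (hpos y hy)))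
    (fun y hy => (hasDerivAt_rpow_const (Or.inl (hpos y hy))).const_mul (2 * H))
  refine ⟨η, hη, ?_⟩
  rw [fgnCov, abs_of_pos (by linarith), abs_of_pos (by linarith), abs_of_pos (by linarith)]
  rw [show 2 * H - 1 - 1 = 2 * H - 2 by ring] at h
  linear_combination h / 2

lemma abs_fgnCov_mem_Icc {H x : ℝ} (hH : H ≤ 1) (hx : 1 < x) :
    |fgnCov H x| ∈ Icc (|H * (2 * H - 1)| * (x + 1) ^ (2 * H - 2))
      (|H * (2 * H - 1)| * (x - 1) ^ (2 * H - 2)) := by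
  obtain ⟨η, ⟨hη₁, hη₂⟩, h⟩ := exists_fgnCov_eq H hx
  have hη : 0 < η := by linarith
  have hexp : 2 * H - 2 ≤ 0 := by linarith
  rw [h, abs_mul _ (η ^ _), abs_of_pos (rpow_pos_of_pos hη _)]
  exact ⟨mul_le_mul_of_nonneg_left (rpow_le_rpow_of_nonpos hη hη₂.le hexp) (abs_nonneg _),
    mul_le_mul_of_nonneg_left (rpow_le_rpow_of_nonpos (by linarith) hη₁.le hexp) (abs_nonneg _)⟩

lemma summable_nat_add_rpow_iff (k : ℕ) {p : ℝ} :
    Summable (fun n : ℕ => ((n : ℝ) + k) ^ p) ↔ p < -1 := by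
  simpa only [Nat.cast_add] using (summable_nat_add_iff k).trans (summable_nat_rpow (p := p))

lemma summable_abs_fgnCov_pow_iff {H : ℝ} (hH : H * (2 * H - 1) ≠ 0) (hH₁ : H ≤ 1) (q : ℕ) :
    Summable (fun n : ℕ => |fgnCov H n| ^ q) ↔ (2 * H - 2) * q < -1 := by
  set c := |H * (2 * H - 1)| ^ q
  have hc : 0 < c := by positivity
  have bounds : ∀ n : ℕ, c * ((n : ℝ) + 3) ^ ((2 * H - 2) * q) ≤ |fgnCov H ↑(n + 2)| ^ q ∧
      |fgnCov H ↑(n + 2)| ^ q ≤ c * ((n : ℝ) + 1) ^ ((2 * H - 2) * q) := by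
    intro n
    have hx : (1 : ℝ) < ↑(n + 2) := by push_cast; linarith [n.cast_nonneg (α := ℝ)]
    obtain ⟨hlo, hhi⟩ := abs_fgnCov_mem_Icc hH₁ hx
    rw [rpow_mul_natCast (by positivity), rpow_mul_natCast (by positivity), ← mul_pow, ← mul_pow]
    push_cast at hlo hhi ⊢
    rw [show (n : ℝ) + 2 + 1 = n + 3 by ring] at hlo
    rw [show (n : ℝ) + 2 - 1 = n + 1 by ring] at hhi
    exact ⟨pow_le_pow_left₀ (by positivity) hlo q, pow_le_pow_left₀ (by positivity) hhi q⟩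
  rw [← summable_nat_add_iff 2]
  constructor
  · intro hs
    have hmin := hs.of_nonneg_of_le (fun n => by positivity) (fun n => (bounds n).1)
    rw [summable_mul_left_iff hc.ne'] at hmin
    exact (summable_nat_add_rpow_iff 3).1 (by exact_mod_cast hmin)
  · intro hp
    have hmaj : Summable (fun n : ℕ => ((n : ℝ) + 1) ^ ((2 * H - 2) * q)) := by
      exact_mod_cast (summable_nat_add_rpow_iff 1).2 hp
    exact (hmaj.mul_left c).of_nonneg_of_le
      (fun n => by positivity) (fun n => (bounds n).2)

lemma summable_abs_fgnCov_half_pow {q : ℕ} (hq : q ≠ 0) :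
    Summable (fun n : ℕ => |fgnCov (1 / 2) n| ^ q) := by
  refine (summable_nat_add_iff 1).mp ?_
  have hzero : (fun n : ℕ => |fgnCov (1 / 2) ↑(n + 1)| ^ q) = 0 := funext fun n => by
    rw [fgnCov_half (by simp), abs_zero, zero_pow hq, Pi.zero_apply]
  exact hzero ▸ summable_zero

lemma mul_natCast_lt_neg_one_iff {H : ℝ} {q : ℕ} (hq : 0 < q) :
    (2 * H - 2) * q < -1 ↔ H < 1 - 1 / (2 * (q : ℝ)) := by
  have hq' : (0 : ℝ) < q := by exact_mod_cast hq
  rw [lt_sub_comm, div_lt_iff₀ (by positivity)]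
  constructor <;> intro h <;> linarith

/-- For an integer `q ≥ 2` and `H ∈ (0,1)`, with
`ρ_H(r) = (1/2)(|r+1|^{2H} + |r−1|^{2H} − 2|r|^{2H})` for `r ∈ ℤ`, one has
`Σ_{r∈ℤ} |ρ_H(r)|^q < ∞` if and only if `H < 1 − 1/(2q)`. -/
theorem stmt9 (q : ℕ) (hq : 2 ≤ q) (H : ℝ) (hH : H ∈ Set.Ioo (0 : ℝ) 1) :
    Summable (fun r : ℤ =>
        |(1 / 2 : ℝ) * (|(r : ℝ) + 1| ^ (2 * H) + |(r : ℝ) - 1| ^ (2 * H)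
          - 2 * |(r : ℝ)| ^ (2 * H))| ^ q)
      ↔ H < 1 - 1 / (2 * (q : ℝ)) := by
  obtain ⟨hH₀, hH₁⟩ := hH
  change Summable (fun r : ℤ => |fgnCov H r| ^ q) ↔ _
  rw [summable_int_iff_summable_nat_and_neg, ← mul_natCast_lt_neg_one_iff (by omega)]
  simp only [Int.cast_neg, Int.cast_natCast, fgnCov_neg, and_self]
  rcases eq_or_ne H (1 / 2) with rfl | hhalf
  · refine iff_of_true (summable_abs_fgnCov_half_pow (by omega)) ?_
    have : (2 : ℝ) ≤ q := by exact_mod_cast hq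
    linarith
  · exact summable_abs_fgnCov_pow_iff
      (mul_ne_zero hH₀.ne' (sub_ne_zero.mpr (by contrapose! hhalf; linarith))) hH₁.le q
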